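/- arXiv:1111.6113 — 3 statements merged into one kernel-verified Lean document; each statement's English description precedes it below -/
import Mathlib

section
/- In any non-associative ring, for all a,b,c,d: (a,[b,c],d) - [b,(a,c,d)] + [c,(a,b,d)] = Q2(a,b,c,d) - Q2(a,c,b,d), where Q2(a,b,c,d) = (a,bc,d) - b(a,c,d) - (a,b,d)c. -/
variable {A : Type*} [NonUnitalNonAssocRing A]

/-- Commutator. -/
def brk (x y : A) : A := x * y - y * x

/-- Associator. -/
def ascr (x y z : A) : A := (x * y) * z - x * (y * z)

/-- Second quaternator. -/
def Q2 (a b c d : A) : A := ascr a (b * c) d - b * ascr a c d - ascr a b d * c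

theorem stmt2 (a b c d : A) :
    ascr a (brk b c) d - brk b (ascr a c d) + brk c (ascr a b d)
      = Q2 a b c d - Q2 a c b d := by
  simp only [brk, ascr, Q2, mul_sub, sub_mul, mul_add, add_mul]; abel
end

section
/- In any non-associative ring, for all a,b,c,d: [(a,b,c),d] - [(d,b,c),a] - ([a,d],b,c) + Q1(a,d,b,c) - Q1(d,a,b,c) = 0. -/
variable {A : Type*} [NonUnitalNonAssocRing A]

/-- First quaternator. -/
def Q1 (a b c d : A) : A := ascr (a * b) c d - a * ascr b c d - ascr a c d * b

theorem stmt6 (a b c d : A) :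
    brk (ascr a b c) d - brk (ascr d b c) a - ascr (brk a d) b c
      + Q1 a d b c - Q1 d a b c = 0 := by
  simp only [brk, ascr, Q1, mul_sub, sub_mul]
  abel
end

section
/- In any non-associative ring, the sum of Q1(a^π, b^π, c^π, d^π) over all 24 permutations π of the four arguments a,b,c,d satisfies Σ_π Q1(a^π,b^π,c^π,d^π) = F(a,b,c,d) - [T(a,b,c)d + T(b,c,d)a + T(c,d,a)b + T(d,a,b)c] - [d·T(a,b,c) + a·T(b,c,d) + b·T(c,d,a) + c·T(d,a,b)], where T(x,y,z) = Σ_{σ∈S3} (x^σ,y^σ,z^σ) is the linearized third-power associativity and F(w,x,y,z) = Σ_{τ∈S4} (w^τ x^τ, y^τ, z^τ) is the linearized fourth-power associativity. -/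
variable {A : Type*} [NonUnitalNonAssocRing A]

/-- Linearized third-power associativity. -/
def T (x y z : A) : A := ascr x y z + ascr x z y + ascr y x z + ascr y z x + ascr z x y + ascr z y x

/-- Linearized fourth-power associativity. -/
def F (w x y z : A) : A :=
    ascr (w * x) y z
  + ascr (w * x) z y
  + ascr (w * y) x z
  + ascr (w * y) z x
  + ascr (w * z) x y
  + ascr (w * z) y x
  + ascr (x * w) y z
  + ascr (x * w) z y
  + ascr (x * y) w z
  + ascr (x * y) z w
  + ascr (x * z) w y
  + ascr (x * z) y w
  + ascr (y * w) x z
  + ascr (y * w) z x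
  + ascr (y * x) w z
  + ascr (y * x) z w
  + ascr (y * z) w x
  + ascr (y * z) x w
  + ascr (z * w) x y
  + ascr (z * w) y x
  + ascr (z * x) w y
  + ascr (z * x) y w
  + ascr (z * y) w x
  + ascr (z * y) x w

/-- Sum of the first quaternator over all 24 permutations of its arguments. -/
def Q1sum (a b c d : A) : A :=
    Q1 a b c d
  + Q1 a b d c
  + Q1 a c b d
  + Q1 a c d b
  + Q1 a d b c
  + Q1 a d c b
  + Q1 b a c d
  + Q1 b a d c
  + Q1 b c a d
  + Q1 b c d a
  + Q1 b d a c
  + Q1 b d c a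
  + Q1 c a b d
  + Q1 c a d b
  + Q1 c b a d
  + Q1 c b d a
  + Q1 c d a b
  + Q1 c d b a
  + Q1 d a b c
  + Q1 d a c b
  + Q1 d b a c
  + Q1 d b c a
  + Q1 d c a b
  + Q1 d c b a

theorem stmt9 (a b c d : A) :
    Q1sum a b c d
      = F a b c d
        - (T a b c * d + T b c d * a + T c d a * b + T d a b * c)
        - (d * T a b c + a * T b c d + b * T c d a + c * T d a b) := by
  simp only [Q1sum, Q1, F, T, ascr, mul_sub, sub_mul, mul_add, add_mul]
  abel
end
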